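/- The side-pairing identities underlying the ridge cycles hold exactly as matrix identities: G₃·G₁·G₂·G₁ = G₂² and G₃·G₂·G₁·G₂⁻¹·G₃ = G₂². -/

import Mathlib

/-!
Put τ = (-1 + ω)/2, a root of τ² + τ + 2 = 0 (the ring of integers of ℚ(√-7) is ℤ[τ]); its conjugate
(-1 - ω)/2 is -1 - τ. Then G₁ and G₃ are unipotent matrices over ℤ[τ] with explicit inverses, G₂ and
G₂⁻¹ come out as explicit matrices over ℤ[τ], and both identities reduce to polynomial identities in τ
modulo τ² + τ + 2. They therefore hold over every commutative ring containing a root of X² + X + 2.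
-/

noncomputable section

open Matrix

/-- ω = i·√7 -/
def ω : ℂ := Complex.I * Real.sqrt 7

def G₁ : Matrix (Fin 3) (Fin 3) ℂ := !![1, 1, (-1-ω)/2; 0, 1, -1; 0, 0, 1]

def G₃ : Matrix (Fin 3) (Fin 3) ℂ := !![1, 0, 0; -1, 1, 0; (-1+ω)/2, 1, 1]

def G₂ : Matrix (Fin 3) (Fin 3) ℂ := G₃ * G₁⁻¹ * G₃⁻¹ * G₁

namespace SidePairing

variable {R : Type*} [CommRing R] {τ : R}

def g₁ (τ : R) : Matrix (Fin 3) (Fin 3) R := !![1, 1, -1 - τ; 0, 1, -1; 0, 0, 1]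

def g₃ (τ : R) : Matrix (Fin 3) (Fin 3) R := !![1, 0, 0; -1, 1, 0; τ, 1, 1]

def g₂ (τ : R) : Matrix (Fin 3) (Fin 3) R := g₃ τ * (g₁ τ)⁻¹ * (g₃ τ)⁻¹ * g₁ τ

lemma inv_g₁ : (g₁ τ)⁻¹ = !![1, -1, τ; 0, 1, 1; 0, 0, 1] :=
  inv_eq_right_inv <| by
    simp only [g₁, mul_fin_three, one_fin_three, EmbeddingLike.apply_eq_iff_eq, vecCons_inj]
    grind

lemma inv_g₃ : (g₃ τ)⁻¹ = !![1, 0, 0; 1, 1, 0; -1 - τ, -1, 1] :=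
  inv_eq_right_inv <| by
    simp only [g₃, mul_fin_three, one_fin_three, EmbeddingLike.apply_eq_iff_eq, vecCons_inj]
    grind

lemma g₂_eq (hτ : τ ^ 2 + τ + 2 = 0) : g₂ τ = !![2, 1 - τ, -1; -2 - τ, -1, 0; -1, 0, 0] := by
  rw [g₂, inv_g₁, inv_g₃]
  simp only [g₁, g₃, mul_fin_three, EmbeddingLike.apply_eq_iff_eq, vecCons_inj]
  grind

lemma inv_g₂ (hτ : τ ^ 2 + τ + 2 = 0) :
    (g₂ τ)⁻¹ = !![0, 0, -1; 0, -1, 2 + τ; -1, τ - 1, 2] :=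
  inv_eq_right_inv <| by
    simp only [g₂_eq hτ, mul_fin_three, one_fin_three, EmbeddingLike.apply_eq_iff_eq, vecCons_inj]
    grind

theorem g₃_mul_g₁_mul_g₂_mul_g₁ (hτ : τ ^ 2 + τ + 2 = 0) :
    g₃ τ * g₁ τ * g₂ τ * g₁ τ = g₂ τ ^ 2 := by
  rw [sq, g₂_eq hτ]
  simp only [g₁, g₃, mul_fin_three, EmbeddingLike.apply_eq_iff_eq, vecCons_inj]
  grind

theorem g₃_mul_g₂_mul_g₁_mul_inv_g₂_mul_g₃ (hτ : τ ^ 2 + τ + 2 = 0) :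
    g₃ τ * g₂ τ * g₁ τ * (g₂ τ)⁻¹ * g₃ τ = g₂ τ ^ 2 := by
  rw [inv_g₂ hτ, sq, g₂_eq hτ]
  simp only [g₁, g₃, mul_fin_three, EmbeddingLike.apply_eq_iff_eq, vecCons_inj]
  grind

end SidePairing

open SidePairing

lemma ω_sq : ω ^ 2 = -7 := by
  rw [ω, mul_pow, Complex.I_sq, ← Complex.ofReal_pow, Real.sq_sqrt (by norm_num)]
  norm_num

lemma G₁_eq : G₁ = g₁ ((-1 + ω) / 2) := by
  simp only [G₁, g₁, EmbeddingLike.apply_eq_iff_eq, vecCons_inj]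
  grind

lemma G₃_eq : G₃ = g₃ ((-1 + ω) / 2) := rfl

lemma G₂_eq : G₂ = g₂ ((-1 + ω) / 2) := by
  rw [G₂, G₁_eq, G₃_eq, g₂]

theorem stmt16 :
    G₃ * G₁ * G₂ * G₁ = G₂ ^ 2 ∧ G₃ * G₂ * G₁ * G₂⁻¹ * G₃ = G₂ ^ 2 := by
  have hτ : ((-1 + ω) / 2) ^ 2 + (-1 + ω) / 2 + 2 = 0 := by linear_combination ω_sq / 4
  rw [G₂_eq, G₁_eq, G₃_eq]
  exact ⟨g₃_mul_g₁_mul_g₂_mul_g₁ hτ, g₃_mul_g₂_mul_g₁_mul_inv_g₂_mul_g₃ hτ⟩
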